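/- arXiv:2501.10162 — 2 statements merged into one kernel-verified Lean document; each statement's English description precedes it below -/
import Mathlib

section
/- Let L ≥ 1, and let σ : ℝ → ℝ be a convex and monotonically non-decreasing function. For l = 0, …, L let W^(l) be real matrices with nonnegative entries (of compatible sizes, with W^(0) unused), let L^(l) be arbitrary real matrices, and let b^(l) be real vectors. Define the Input Convex Neural Network map by x^0 = x, x^1 = σ(L^(0) x^0 + b^(0)) applied componentwise, x^l = σ(W^(l−1) x^(l−1) + L^(l−1) x^0 + b^(l−1)) componentwise for 2 ≤ l ≤ L, and y = W^(L) x^L + L^(L) x^0 + b^(L). Then every component of the output map x ↦ y is a convex function of the input x ∈ ℝ^(N₀). -/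
open Matrix

/-- The hidden layers of an Input Convex Neural Network:
`x^0 = x`, `x^1 = σ(L^(0) x^0 + b^(0))`,
`x^l = σ(W^(l-1) x^(l-1) + L^(l-1) x^0 + b^(l-1))` for `2 ≤ l`,
with `σ` applied componentwise. -/
noncomputable def icnnHidden (σ : ℝ → ℝ) (N : ℕ → ℕ)
    (W : (l : ℕ) → Matrix (Fin (N (l + 1))) (Fin (N l)) ℝ)
    (Lm : (l : ℕ) → Matrix (Fin (N (l + 1))) (Fin (N 0)) ℝ)
    (b : (l : ℕ) → Fin (N (l + 1)) → ℝ)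
    (x : Fin (N 0) → ℝ) : (l : ℕ) → Fin (N l) → ℝ
  | 0 => x
  | 1 => fun i => σ (((Lm 0).mulVec x + b 0) i)
  | (l + 2) => fun i =>
      σ (((W (l + 1)).mulVec (icnnHidden σ N W Lm b x (l + 1)) +
          (Lm (l + 1)).mulVec x + b (l + 1)) i)

/-!
Every pre-activation `W x^l + L x + b` is a nonnegative combination of functions of the input
that are convex by induction, plus an affine function of the input, hence convex. A convex
non-decreasing `σ` preserves convexity, so every hidden unit is convex, and the output is one
more such pre-activation.
-/

open Set

section Convexity

variable {E : Type*} [AddCommGroup E] [Module ℝ E] {s : Set E}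

theorem ConvexOn.monotone_comp {g : ℝ → ℝ} {f : E → ℝ} (hg : ConvexOn ℝ univ g)
    (hg' : Monotone g) (hf : ConvexOn ℝ s f) : ConvexOn ℝ s (g ∘ f) :=
  ⟨hf.1, fun _ hx _ hy _ _ ha hb hab =>
    (hg' (hf.2 hx hy ha hb hab)).trans (hg.2 trivial trivial ha hb hab)⟩

theorem ConvexOn.finset_sum {ι : Type*} (t : Finset ι) {f : ι → E → ℝ} (hs : Convex ℝ s)
    (hf : ∀ j ∈ t, ConvexOn ℝ s (f j)) : ConvexOn ℝ s fun x => ∑ j ∈ t, f j x := by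
  classical
  induction t using Finset.induction_on with
  | empty => simpa using convexOn_const 0 hs
  | insert j t hj ih =>
    simp only [Finset.sum_insert hj]
    exact (hf j (t.mem_insert_self j)).add (ih fun k hk => hf k (Finset.mem_insert_of_mem hk))

theorem ConvexOn.nonneg_dotProduct {ι : Type*} [Fintype ι] {w : ι → ℝ} (hw : 0 ≤ w)
    {f : E → ι → ℝ} (hs : Convex ℝ s) (hf : ∀ j, ConvexOn ℝ s fun x => f x j) :
    ConvexOn ℝ s fun x => w ⬝ᵥ f x :=
  ConvexOn.finset_sum Finset.univ hs fun j _ => (hf j).smul (hw j)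

end Convexity

section Layers

variable {k m n : Type*} [Fintype k] [Fintype n]

theorem convexOn_mulVec_add_apply (A : Matrix m n ℝ) (c : m → ℝ) (i : m) :
    ConvexOn ℝ univ fun x => (A *ᵥ x + c) i :=
  (((LinearMap.proj i).comp A.mulVecLin).convexOn convex_univ).add_const (c i)

theorem convexOn_nonneg_mulVec_comp_add_affine_apply {W : Matrix m k ℝ} (hW : ∀ i j, 0 ≤ W i j)
    {h : (n → ℝ) → k → ℝ} (hh : ∀ j, ConvexOn ℝ univ fun x => h x j)
    (A : Matrix m n ℝ) (c : m → ℝ) (i : m) :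
    ConvexOn ℝ univ fun x => (W *ᵥ h x + A *ᵥ x + c) i := by
  simp only [Pi.add_apply, add_assoc]
  exact (ConvexOn.nonneg_dotProduct (hW i) convex_univ hh).add (convexOn_mulVec_add_apply A c i)

end Layers

theorem convexOn_icnnHidden {σ : ℝ → ℝ} (hσconv : ConvexOn ℝ univ σ) (hσmono : Monotone σ)
    {N : ℕ → ℕ} {W : (l : ℕ) → Matrix (Fin (N (l + 1))) (Fin (N l)) ℝ}
    (Lm : (l : ℕ) → Matrix (Fin (N (l + 1))) (Fin (N 0)) ℝ) (b : (l : ℕ) → Fin (N (l + 1)) → ℝ) :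
    ∀ {l : ℕ}, (∀ m < l, ∀ i j, 0 ≤ W m i j) →
      ∀ i : Fin (N l), ConvexOn ℝ univ fun x => icnnHidden σ N W Lm b x l i
  | 0, _, i => (LinearMap.proj i).convexOn convex_univ
  | 1, _, i => hσconv.monotone_comp hσmono (convexOn_mulVec_add_apply _ _ i)
  | l + 2, hW, i =>
    hσconv.monotone_comp hσmono <|
      convexOn_nonneg_mulVec_comp_add_affine_apply (hW (l + 1) (by omega))
        (convexOn_icnnHidden hσconv hσmono Lm b fun m hm => hW m (by omega)) _ _ i

theorem icnn_output_convex_general (σ : ℝ → ℝ)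
    (hσconv : ConvexOn ℝ Set.univ σ) (hσmono : Monotone σ)
    (L : ℕ) (N : ℕ → ℕ)
    (W : (l : ℕ) → Matrix (Fin (N (l + 1))) (Fin (N l)) ℝ)
    (hW : ∀ l, l ≤ L → ∀ i j, 0 ≤ W l i j)
    (Lm : (l : ℕ) → Matrix (Fin (N (l + 1))) (Fin (N 0)) ℝ)
    (b : (l : ℕ) → Fin (N (l + 1)) → ℝ) :
    ∀ i : Fin (N (L + 1)),
      ConvexOn ℝ Set.univ fun x : Fin (N 0) → ℝ =>
        ((W L).mulVec (icnnHidden σ N W Lm b x L) + (Lm L).mulVec x + b L) i := by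
  intro i
  exact convexOn_nonneg_mulVec_comp_add_affine_apply (hW L le_rfl)
    (convexOn_icnnHidden hσconv hσmono Lm b fun m hm => hW m hm.le) _ _ i

/-- Every component of the output `y = W^(L) x^L + L^(L) x^0 + b^(L)` of an
Input Convex Neural Network with `L ≥ 1` hidden layers, convex non-decreasing
activation `σ`, and nonnegative weight matrices `W^(l)`, is a convex function
of the input `x ∈ ℝ^(N₀)`. -/
theorem icnn_output_convex (σ : ℝ → ℝ)
    (hσconv : ConvexOn ℝ Set.univ σ) (hσmono : Monotone σ)
    (L : ℕ) (hL : 1 ≤ L) (N : ℕ → ℕ)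
    (W : (l : ℕ) → Matrix (Fin (N (l + 1))) (Fin (N l)) ℝ)
    (hW : ∀ l, l ≤ L → ∀ i j, 0 ≤ W l i j)
    (Lm : (l : ℕ) → Matrix (Fin (N (l + 1))) (Fin (N 0)) ℝ)
    (b : (l : ℕ) → Fin (N (l + 1)) → ℝ) :
    ∀ i : Fin (N (L + 1)),
      ConvexOn ℝ Set.univ fun x : Fin (N 0) → ℝ =>
        ((W L).mulVec (icnnHidden σ N W Lm b x L) + (Lm L).mulVec x + b L) i :=
  icnn_output_convex_general σ hσconv hσmono L N W hW Lm b
end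

section
/- Let M_X and M_Y be symmetric positive definite 2×2 real matrices. Then there exists a rotation matrix R_θ = [[cos θ, −sin θ], [sin θ, cos θ]] such that the matrix A = M_Y R_θ M_X⁻¹ is symmetric positive definite. -/
/-!
Conjugating by `M_X`, the matrix `M_Y R M_X⁻¹` is positive definite iff `C R` is, where
`C = M_X M_Y` has positive determinant. For a `2 × 2` matrix, `C R_θ` is symmetric exactly when
`(cos θ, sin θ)` is proportional to `(C₀₀ + C₁₁, C₀₁ - C₁₀)`; choosing the positive multiple
makes its trace `‖(C₀₀ + C₁₁, C₀₁ - C₁₀)‖ > 0`, and its determinant is `det C > 0`, so it is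
positive definite.
-/

open Matrix Real

namespace Matrix

theorem IsHermitian.posDef_of_trace_pos_of_det_pos {A : Matrix (Fin 2) (Fin 2) ℝ}
    (hA : A.IsHermitian) (htr : 0 < A.trace) (hdet : 0 < A.det) : A.PosDef := by
  have hsymm : A 1 0 = A 0 1 := by simpa using congrFun (congrFun hA 0) 1
  rw [trace_fin_two] at htr
  rw [det_fin_two, hsymm] at hdet
  have ha : 0 < A 0 0 := by nlinarith [sq_nonneg (A 0 1)]
  refine .of_dotProduct_mulVec_pos hA fun x hx => ?_
  have hsq : A 0 0 * (star x ⬝ᵥ A *ᵥ x)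
      = (A 0 0 * x 0 + A 0 1 * x 1) ^ 2 + (A 0 0 * A 1 1 - A 0 1 * A 0 1) * x 1 ^ 2 := by
    simp only [dotProduct, mulVec, Fin.sum_univ_two, Pi.star_apply, star_trivial, hsymm]
    ring
  refine pos_of_mul_pos_right (hsq ▸ ?_) ha.le
  rcases eq_or_ne (x 1) 0 with h1 | h1
  · have h0 : x 0 ≠ 0 := fun h0 => hx (funext fun i => by fin_cases i <;> simp [h0, h1])
    have : 0 < (A 0 0 * x 0) ^ 2 := by positivity
    simpa [h1] using this
  · exact add_pos_of_nonneg_of_pos (sq_nonneg _) (by positivity)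

end Matrix

theorem exists_rotation_mul_posDef {C : Matrix (Fin 2) (Fin 2) ℝ} (hC : 0 < C.det) :
    ∃ θ : ℝ, (C * !![cos θ, -sin θ; sin θ, cos θ]).PosDef := by
  set z : ℂ := ⟨C 0 0 + C 1 1, C 0 1 - C 1 0⟩
  have hz : z ≠ 0 := by
    intro h
    obtain ⟨h0, h1⟩ : C 0 0 + C 1 1 = 0 ∧ C 0 1 - C 1 0 = 0 := Complex.ext_iff.1 h
    rw [det_fin_two, show C 1 1 = -C 0 0 by linarith, show C 1 0 = C 0 1 by linarith] at hC
    nlinarith [sq_nonneg (C 0 0), sq_nonneg (C 0 1)]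
  have hr : 0 < ‖z‖ := norm_pos_iff.2 hz
  have hcos := Complex.cos_arg hz
  have hsin := Complex.sin_arg z
  refine ⟨Complex.arg z, IsHermitian.posDef_of_trace_pos_of_det_pos ?_ ?_ ?_⟩
  · have hsym : (C 0 1 - C 1 0) * cos z.arg = (C 0 0 + C 1 1) * sin z.arg := by
      rw [hcos, hsin]; ring
    ext i j
    fin_cases i <;> fin_cases j <;>
      simp only [Fin.zero_eta, Fin.mk_one, Fin.isValue, conjTranspose_apply, star_trivial,
        mul_apply, Fin.sum_univ_two, of_apply, cons_val', cons_val_zero, cons_val_one,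
        cons_val_fin_one, mul_neg] <;>
      linarith
  · have htr : (C * !![cos z.arg, -sin z.arg; sin z.arg, cos z.arg]).trace = ‖z‖ := by
      rw [trace_fin_two]
      simp only [mul_apply, Fin.sum_univ_two, of_apply, cons_val', cons_val_zero, cons_val_one,
        cons_val_fin_one, mul_neg, hcos, hsin]
      have hn : ‖z‖ ^ 2 = z.re ^ 2 + z.im ^ 2 := by
        rw [Complex.sq_norm, Complex.normSq_apply]; ring
      field_simp
      linear_combination -hn
    exact htr ▸ hr
  · rw [det_mul, det_fin_two_of, neg_mul, sub_neg_eq_add, ← sq, ← sq, cos_sq_add_sin_sq, mul_one]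
    exact hC

/-- For symmetric positive definite `2×2` real matrices `M_X, M_Y`, there exists a
rotation matrix `R_θ` such that `M_Y R_θ M_X⁻¹` is symmetric positive definite. -/
theorem exists_rotation_posDef (MX MY : Matrix (Fin 2) (Fin 2) ℝ)
    (hMX : MX.PosDef) (hMY : MY.PosDef) :
    ∃ θ : ℝ,
      (MY * !![Real.cos θ, -Real.sin θ; Real.sin θ, Real.cos θ] * MX⁻¹).PosDef := by
  obtain ⟨θ, hθ⟩ := exists_rotation_mul_posDef (C := MX * MY)
    (by rw [det_mul]; exact mul_pos hMX.det_pos hMY.det_pos)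
  refine ⟨θ, (IsUnit.posDef_star_left_conjugate_iff hMX.isUnit).1 ?_⟩
  rwa [star_eq_conjTranspose, hMX.isHermitian.eq, mul_assoc MX,
    nonsing_inv_mul_cancel_right _ _ ((isUnit_iff_isUnit_det _).1 hMX.isUnit), ← mul_assoc]
end
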